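/- Let k be an algebraically closed field, let f_1,…,f_s ∈ k[x_1,…,x_n], and let I = ⟨f_1,…,f_s⟩. Then 1 ∈ I + ⟨∂f_i/∂x_j : 1 ≤ i ≤ s, 1 ≤ j ≤ n⟩ if and only if there is no point p ∈ kⁿ with I ⊆ m_p². Equivalently, the order of I is at most one at every point of kⁿ if and only if the ideal Δ(I) generated by the f_i and all their first partial derivatives is the unit ideal. -/

import Mathlib

/-!
Since `m_p = ⟨x_1 - p_1, …, x_n - p_n⟩`, writing `g = ∑ c_j (x_j - p_j)` shows that
`∂g/∂x_j (p) = c_j(p)`; hence `g ∈ m_p²` iff `g` and all its first partials vanish at `p`.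
So `I ⊆ m_p²` iff `Δ(I) ⊆ m_p`, and by the weak Nullstellensatz the ideal `Δ(I)` is proper iff
it lies in some `m_p`.
-/

open MvPolynomial

/-- The maximal ideal of `k[x_1,…,x_n]` of polynomials vanishing at the point `p`,
i.e. the kernel of the evaluation map at `p` (equivalently `⟨x_1 - p_1, …, x_n - p_n⟩`). -/
noncomputable def mP {k : Type} [Field k] {n : ℕ} (p : Fin n → k) :
    Ideal (MvPolynomial (Fin n) k) :=
  RingHom.ker (eval p)

section

variable {k : Type} [Field k] {n : ℕ}

theorem mem_mP {p : Fin n → k} {g : MvPolynomial (Fin n) k} : g ∈ mP p ↔ eval p g = 0 :=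
  Iff.rfl

theorem X_sub_C_mem_mP (p : Fin n → k) (i : Fin n) : X i - C (p i) ∈ mP p := by
  simp [mem_mP]

theorem sub_C_eval_mem_span_X_sub_C (p : Fin n → k) (g : MvPolynomial (Fin n) k) :
    g - C (eval p g) ∈ Ideal.span (Set.range fun i => X i - C (p i)) := by
  induction g using MvPolynomial.induction_on with
  | C a => simp
  | add g h hg hh =>
    convert Ideal.add_mem _ hg hh using 1
    simp only [map_add]; ring
  | mul_X g i hg =>
    have hi : X i - C (p i) ∈ Ideal.span (Set.range fun i => X i - C (p i)) :=
      Ideal.subset_span ⟨i, rfl⟩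
    convert Ideal.add_mem _ (Ideal.mul_mem_left _ g hi) (Ideal.mul_mem_right (C (p i)) _ hg)
      using 1
    simp only [map_mul, eval_X]; ring

theorem mP_eq_span_X_sub_C (p : Fin n → k) :
    mP p = Ideal.span (Set.range fun i => X i - C (p i)) := by
  refine le_antisymm (fun g hg => ?_) (Ideal.span_le.mpr ?_)
  · simpa [mem_mP.mp hg] using sub_C_eval_mem_span_X_sub_C p g
  · rintro _ ⟨i, rfl⟩
    exact X_sub_C_mem_mP p i

theorem eval_pderiv_eq_zero_of_mem_mP_sq {p : Fin n → k} {g : MvPolynomial (Fin n) k}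
    (hg : g ∈ mP p ^ 2) (j : Fin n) : eval p (pderiv j g) = 0 := by
  rw [pow_two] at hg
  refine Submodule.mul_induction_on hg (fun a ha b hb => ?_) (fun x y hx hy => ?_)
  · simp [mem_mP.mp ha, mem_mP.mp hb]
  · simp [hx, hy]

theorem mem_mP_sq_iff {p : Fin n → k} {g : MvPolynomial (Fin n) k} :
    g ∈ mP p ^ 2 ↔ g ∈ mP p ∧ ∀ j, eval p (pderiv j g) = 0 := by
  refine ⟨fun hg => ⟨Ideal.pow_le_self two_ne_zero hg, eval_pderiv_eq_zero_of_mem_mP_sq hg⟩, ?_⟩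
  rintro ⟨hg, hd⟩
  rw [mP_eq_span_X_sub_C, Ideal.mem_span_range_iff_exists_fun] at hg
  obtain ⟨c, rfl⟩ := hg
  have hc : ∀ j, c j ∈ mP p := fun j => by
    simpa [pderiv_X, Pi.single_apply, mem_mP, apply_ite (eval p)] using hd j
  rw [pow_two]
  exact Ideal.sum_mem _ fun i _ => Ideal.mul_mem_mul (hc i) (X_sub_C_mem_mP p i)

theorem span_le_mP_sq_iff {ι : Type*} (p : Fin n → k) (f : ι → MvPolynomial (Fin n) k) :
    Ideal.span (Set.range f) ≤ mP p ^ 2 ↔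
      Ideal.span (Set.range f) +
        Ideal.span (Set.range fun ij : ι × Fin n => pderiv ij.2 (f ij.1)) ≤ mP p := by
  simp only [Ideal.add_eq_sup, sup_le_iff, Ideal.span_le, Set.range_subset_iff, SetLike.mem_coe,
    mem_mP_sq_iff, Prod.forall]
  exact ⟨fun h => ⟨fun i => (h i).1, fun i j => (h i).2 j⟩, fun h i => ⟨h.1 i, fun j => h.2 i j⟩⟩

theorem mP_eq_vanishingIdeal_singleton (p : Fin n → k) : mP p = vanishingIdeal k {p} := by
  ext g
  exact (mem_vanishingIdeal_singleton_iff p g).symm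

theorem exists_le_mP_iff_ne_top [IsAlgClosed k] {J : Ideal (MvPolynomial (Fin n) k)} :
    (∃ p, J ≤ mP p) ↔ J ≠ ⊤ := by
  refine ⟨fun ⟨p, hp⟩ hJ => RingHom.ker_ne_top _ (top_le_iff.mp (hJ ▸ hp)), fun hJ => ?_⟩
  obtain ⟨M, hM, hJM⟩ := Ideal.exists_le_maximal J hJ
  obtain ⟨p, rfl⟩ := eq_vanishingIdeal_singleton_of_isMaximal k hM
  exact ⟨p, mP_eq_vanishingIdeal_singleton p ▸ hJM⟩

end

/-- Over an algebraically closed field, `1 ∈ Δ(I) = I + ⟨∂f_i/∂x_j⟩` if and only if there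
is no point `p ∈ kⁿ` with `I ⊆ m_p²`, i.e. the order of `I` is at most one everywhere. -/
theorem delta_eq_top_iff_order_le_one {k : Type} [Field k] [IsAlgClosed k] {n s : ℕ}
    (f : Fin s → MvPolynomial (Fin n) k) :
    (1 : MvPolynomial (Fin n) k) ∈
        Ideal.span (Set.range f) +
          Ideal.span (Set.range fun ij : Fin s × Fin n => pderiv ij.2 (f ij.1)) ↔
      ¬ ∃ p : Fin n → k, Ideal.span (Set.range f) ≤ (mP p) ^ 2 := by
  simp_rw [span_le_mP_sq_iff, exists_le_mP_iff_ne_top, not_not, Ideal.eq_top_iff_one]
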